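/- Under the same assumptions, the dual function d(x) = min_{u ∈ U} [f(u) + ⟨x, g(u)⟩] is differentiable on ℝᵖ₊ with ∇d(x) = g(u(x)), and its gradient is Lipschitz continuous with constant L_d = c_g²/σ_f: ‖∇d(x) − ∇d(x̄)‖ ≤ (c_g²/σ_f)‖x − x̄‖ for all x, x̄ ∈ ℝᵖ₊. -/

import Mathlib

/-!
For `x ≥ 0` the Lagrangian `L(·, x)` is `σ_f`-strongly convex on `U`, so it grows quadratically
away from its minimizer: `L(u(x), x) + σ_f / 2 * ‖v - u(x)‖² ≤ L(v, x)` on `U`. Adding this at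
`(x, u(x̄))` and `(x̄, u(x))` gives
`σ_f ‖u(x) - u(x̄)‖² ≤ ⟪x - x̄, g(u(x̄)) - g(u(x))⟫ ≤ c_g ‖x - x̄‖ ‖u(x) - u(x̄)‖`,
since `g` is `c_g`-Lipschitz on `U` by the mean value inequality. Hence
`‖g(u(x)) - g(u(x̄))‖ ≤ c_g ‖u(x) - u(x̄)‖ ≤ c_g² / σ_f ‖x - x̄‖`.
Minimality of `u(x)` and `u(y)` sandwiches `d(y) - d(x) - ⟪g(u(x)), y - x⟫` between
`⟪y - x, g(u(y)) - g(u(x))⟫` and `0`, which is `O(‖y - x‖²)` by this Lipschitz bound; so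
`∇d(x) = g(u(x))`.
-/

open scoped RealInnerProductSpace

open Filter Topology

section Jacobian

variable {E : Type*} [NormedAddCommGroup E] [InnerProductSpace ℝ E] {ι : Type*}

noncomputable def jacobianCLM (D : ι → E) : E →L[ℝ] EuclideanSpace ℝ ι :=
  (EuclideanSpace.equiv ι ℝ).symm.toContinuousLinearMap ∘L
    ContinuousLinearMap.pi fun i => innerSL ℝ (D i)

@[simp]
lemma jacobianCLM_apply (D : ι → E) (z : E) (i : ι) : jacobianCLM D z i = ⟪D i, z⟫ := rfl

lemma norm_jacobianCLM_le [Fintype ι] (D : ι → E) : ‖jacobianCLM D‖ ≤ √(∑ i, ‖D i‖ ^ 2) := by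
  refine ContinuousLinearMap.opNorm_le_bound _ (Real.sqrt_nonneg _) fun z => ?_
  calc ‖jacobianCLM D z‖ = √(∑ i, ⟪D i, z⟫ ^ 2) := by simp [EuclideanSpace.norm_eq]
    _ ≤ √(∑ i, ‖D i‖ ^ 2 * ‖z‖ ^ 2) := by
      gcongr with i
      rw [← mul_pow, ← sq_abs]
      gcongr
      exact abs_real_inner_le_norm _ _
    _ = √(∑ i, ‖D i‖ ^ 2) * ‖z‖ := by
      rw [← Finset.sum_mul, Real.sqrt_mul (by positivity), Real.sqrt_sq (norm_nonneg _)]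

lemma hasFDerivWithinAt_jacobianCLM [CompleteSpace E] [Finite ι] {g : E → EuclideanSpace ℝ ι}
    {D : ι → E} {s : Set E} {v : E}
    (hg : ∀ i, HasGradientAt (fun w => g w i) (D i) v) :
    HasFDerivWithinAt g (jacobianCLM D) s v :=
  hasFDerivWithinAt_euclidean.2 fun i => (hg i).hasFDerivAt.hasFDerivWithinAt

lemma Convex.norm_sub_le_of_sqrt_sum_sq_norm_gradient_le [CompleteSpace E] [Fintype ι]
    {U : Set E} (hU : Convex ℝ U) {g : E → EuclideanSpace ℝ ι} {Dg : E → ι → E} {C : ℝ}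
    (hg : ∀ i, ∀ v ∈ U, HasGradientAt (fun w => g w i) (Dg v i) v)
    (hC : ∀ v ∈ U, √(∑ i, ‖Dg v i‖ ^ 2) ≤ C) {u v : E} (hu : u ∈ U) (hv : v ∈ U) :
    ‖g u - g v‖ ≤ C * ‖u - v‖ :=
  hU.norm_image_sub_le_of_norm_hasFDerivWithin_le
    (fun w hw => hasFDerivWithinAt_jacobianCLM fun i => hg i w hw)
    (fun w hw => (norm_jacobianCLM_le _).trans (hC w hw)) hv hu

end Jacobian

section StrongSubgradient

variable {E : Type*} [NormedAddCommGroup E] [InnerProductSpace ℝ E]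

def HasStrongSubgradientsOn (U : Set E) (σ : ℝ) (φ : E → ℝ) (G : E → E) : Prop :=
  ∀ u ∈ U, ∀ v ∈ U, φ v + ⟪G v, u - v⟫ + σ / 2 * ‖u - v‖ ^ 2 ≤ φ u

lemma HasStrongSubgradientsOn.add_sum_smul {U : Set E} {σ : ℝ} {φ : E → ℝ} {G : E → E}
    (hφ : HasStrongSubgradientsOn U σ φ G) {ι : Type*} (s : Finset ι) {ψ : ι → E → ℝ}
    {H : ι → E → E} (hψ : ∀ i, ∀ u ∈ U, ∀ v ∈ U, ψ i v + ⟪H i v, u - v⟫ ≤ ψ i u)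
    {c : ι → ℝ} (hc : ∀ i, 0 ≤ c i) :
    HasStrongSubgradientsOn U σ (fun w => φ w + ∑ i ∈ s, c i * ψ i w)
      (fun w => G w + ∑ i ∈ s, c i • H i w) := by
  intro u hu v hv
  have hsum : ∑ i ∈ s, c i * (ψ i v + ⟪H i v, u - v⟫) ≤ ∑ i ∈ s, c i * ψ i u :=
    Finset.sum_le_sum fun i _ => mul_le_mul_of_nonneg_left (hψ i u hu v hv) (hc i)
  simp only [mul_add, Finset.sum_add_distrib] at hsum
  simp only [inner_add_left, sum_inner, real_inner_smul_left]
  linarith [hφ u hu v hv]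

/-- The strong subgradient inequalities are used at `w = u + t • (v - u)` rather than at `u`, where
no first-order optimality condition is available; this costs a factor `1 - t`, removed by letting
`t → 0`. -/
lemma HasStrongSubgradientsOn.add_sq_le_of_isMinOn {U : Set E} {σ : ℝ} {φ : E → ℝ} {G : E → E}
    (hφ : HasStrongSubgradientsOn U σ φ G) (hU : Convex ℝ U) {u v : E} (hmin : IsMinOn φ U u)
    (hu : u ∈ U) (hv : v ∈ U) :
    φ u + σ / 2 * ‖v - u‖ ^ 2 ≤ φ v := by
  have hgap : ∀ t ∈ Set.Ioc (0 : ℝ) 1, σ / 2 * (1 - t) * ‖v - u‖ ^ 2 ≤ φ v - φ u := by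
    rintro t ⟨ht0, ht1⟩
    set w := u + t • (v - u)
    have hw : w ∈ U := hU.add_smul_sub_mem hu hv ⟨ht0.le, ht1⟩
    have hφu := hφ u hu w hw
    have hφv := hφ v hv w hw
    rw [show u - w = (-t) • (v - u) by module, real_inner_smul_right, norm_smul,
      Real.norm_eq_abs, mul_pow, sq_abs] at hφu
    rw [show v - w = (1 - t) • (v - u) by module, real_inner_smul_right, norm_smul,
      Real.norm_eq_abs, mul_pow, sq_abs] at hφv
    have hφw : φ u ≤ φ w := hmin hw
    nlinarith [mul_le_mul_of_nonneg_left hφu (sub_nonneg.2 ht1),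
      mul_le_mul_of_nonneg_left hφv ht0.le]
  have hlim : Tendsto (fun t : ℝ => σ / 2 * (1 - t) * ‖v - u‖ ^ 2) (𝓝[>] 0)
      (𝓝 (σ / 2 * ‖v - u‖ ^ 2)) :=
    ((by fun_prop : Continuous fun t : ℝ => σ / 2 * (1 - t) * ‖v - u‖ ^ 2).tendsto' 0 _
      (by ring)).mono_left nhdsWithin_le_nhds
  linarith [le_of_tendsto hlim (Filter.mem_of_superset (Ioc_mem_nhdsGT one_pos) hgap)]

end StrongSubgradient

section Lagrangian

variable {E F : Type*} [NormedAddCommGroup F] [InnerProductSpace ℝ F] {f : E → ℝ} {g : E → F}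
  {U : Set E}

/-- `lagrangian f g x u` is the Lagrangian `L(u, x)`. -/
def lagrangian (f : E → ℝ) (g : E → F) (x : F) (u : E) : ℝ := f u + ⟪x, g u⟫

lemma lagrangian_euclidean {ι : Type*} [Fintype ι] (f : E → ℝ) (g : E → EuclideanSpace ℝ ι)
    (x : EuclideanSpace ℝ ι) (u : E) : lagrangian f g x u = f u + ∑ i, x i * g u i := by
  simp [lagrangian, PiLp.inner_apply, mul_comm]

lemma IsMinOn.lagrangian_le_add_inner {x y : F} {u v : E} (hv : IsMinOn (lagrangian f g y) U v)
    (hu : u ∈ U) : lagrangian f g y v ≤ lagrangian f g x u + ⟪y - x, g u⟫ := by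
  have : lagrangian f g y v ≤ lagrangian f g y u := hv hu
  simp only [lagrangian, inner_sub_left] at this ⊢
  linarith

lemma hasGradientWithinAt_of_abs_sub_sub_inner_le [CompleteSpace F] {d : F → ℝ} {a x : F}
    {s : Set F} {C : ℝ} (h : ∀ y ∈ s, |d y - d x - ⟪a, y - x⟫| ≤ C * ‖y - x‖ ^ 2) :
    HasGradientWithinAt d a s x := by
  rw [hasGradientWithinAt_iff_isLittleO]
  refine (Asymptotics.IsBigO.of_bound C ?_).trans_isLittleO
    ((Asymptotics.isLittleO_pow_sub_sub x one_lt_two).mono nhdsWithin_le_nhds)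
  filter_upwards [self_mem_nhdsWithin] with y hy
  simpa using h y hy

/-- Danskin's theorem. -/
lemma hasGradientWithinAt_dual [CompleteSpace F] {ux : F → E} {d : F → ℝ} {s : Set F} {C : ℝ}
    (hmem : ∀ x ∈ s, ux x ∈ U) (hmin : ∀ x ∈ s, IsMinOn (lagrangian f g x) U (ux x))
    (hd : ∀ x ∈ s, d x = lagrangian f g x (ux x))
    (hlip : ∀ x ∈ s, ∀ y ∈ s, ‖g (ux x) - g (ux y)‖ ≤ C * ‖x - y‖) {x : F} (hx : x ∈ s) :
    HasGradientWithinAt d (g (ux x)) s x := by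
  refine hasGradientWithinAt_of_abs_sub_sub_inner_le (C := C) fun y hy => ?_
  have hup := (hmin y hy).lagrangian_le_add_inner (x := x) (hmem x hx)
  have hlow := (hmin x hx).lagrangian_le_add_inner (x := y) (hmem y hy)
  have hcs : |⟪y - x, g (ux y) - g (ux x)⟫| ≤ C * ‖y - x‖ ^ 2 :=
    calc |⟪y - x, g (ux y) - g (ux x)⟫| ≤ ‖y - x‖ * ‖g (ux y) - g (ux x)‖ :=
          abs_real_inner_le_norm _ _
      _ ≤ ‖y - x‖ * (C * ‖y - x‖) := by gcongr; exact hlip y hy x hx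
      _ = C * ‖y - x‖ ^ 2 := by ring
  rw [← neg_sub y x, inner_neg_left] at hlow
  rw [abs_le, inner_sub_right] at hcs
  rw [hd y hy, hd x hx, real_inner_comm, abs_le]
  constructor <;> linarith [hcs.1, hcs.2]

variable [NormedAddCommGroup E]

lemma mul_sq_norm_sub_le_inner_of_lagrangian_growth {σ : ℝ} {x x' : F} {u u' : E}
    (hu : u ∈ U) (hu' : u' ∈ U)
    (hgrowth : ∀ v ∈ U, lagrangian f g x u + σ / 2 * ‖v - u‖ ^ 2 ≤ lagrangian f g x v)
    (hgrowth' : ∀ v ∈ U, lagrangian f g x' u' + σ / 2 * ‖v - u'‖ ^ 2 ≤ lagrangian f g x' v) :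
    σ * ‖u - u'‖ ^ 2 ≤ ⟪x - x', g u' - g u⟫ := by
  have h := hgrowth u' hu'
  have h' := hgrowth' u hu
  simp only [lagrangian, inner_sub_left, inner_sub_right, norm_sub_rev u' u] at h h' ⊢
  linarith

lemma norm_sub_le_of_lagrangian_growth {σ C : ℝ} (hσ : 0 < σ) (hC : 0 ≤ C)
    (hg : ∀ u ∈ U, ∀ v ∈ U, ‖g u - g v‖ ≤ C * ‖u - v‖) {x x' : F} {u u' : E}
    (hu : u ∈ U) (hu' : u' ∈ U)
    (hgrowth : ∀ v ∈ U, lagrangian f g x u + σ / 2 * ‖v - u‖ ^ 2 ≤ lagrangian f g x v)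
    (hgrowth' : ∀ v ∈ U, lagrangian f g x' u' + σ / 2 * ‖v - u'‖ ^ 2 ≤ lagrangian f g x' v) :
    ‖g u - g u'‖ ≤ C ^ 2 / σ * ‖x - x'‖ := by
  have hmono : σ * ‖u - u'‖ * ‖u - u'‖ ≤ C * ‖x - x'‖ * ‖u - u'‖ :=
    calc σ * ‖u - u'‖ * ‖u - u'‖ ≤ ⟪x - x', g u' - g u⟫ := by
          rw [mul_assoc, ← sq]
          exact mul_sq_norm_sub_le_inner_of_lagrangian_growth hu hu' hgrowth hgrowth'
      _ ≤ ‖x - x'‖ * ‖g u' - g u‖ := real_inner_le_norm _ _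
      _ ≤ ‖x - x'‖ * (C * ‖u - u'‖) := by
          rw [norm_sub_rev (g u')]
          gcongr
          exact hg u hu u' hu'
      _ = C * ‖x - x'‖ * ‖u - u'‖ := by ring
  have hdist : σ * ‖u - u'‖ ≤ C * ‖x - x'‖ := by
    rcases (norm_nonneg (u - u')).eq_or_lt with h | h
    · rw [← h, mul_zero]
      positivity
    · exact le_of_mul_le_mul_right hmono h
  calc ‖g u - g u'‖ ≤ C * ‖u - u'‖ := hg u hu u' hu'
    _ ≤ C * (C / σ * ‖x - x'‖) := by
        gcongr
        rw [div_mul_eq_mul_div, le_div_iff₀ hσ]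
        linarith
    _ = C ^ 2 / σ * ‖x - x'‖ := by ring

end Lagrangian

theorem dual_function_gradient_lipschitz_general {n p : ℕ}
    (U : Set (EuclideanSpace ℝ (Fin n)))
    (hUconv : Convex ℝ U)
    (f : EuclideanSpace ℝ (Fin n) → ℝ)
    (gradf : EuclideanSpace ℝ (Fin n) → EuclideanSpace ℝ (Fin n))
    (g : EuclideanSpace ℝ (Fin n) → EuclideanSpace ℝ (Fin p))
    (Dg : EuclideanSpace ℝ (Fin n) → Fin p → EuclideanSpace ℝ (Fin n))
    (σf cg : ℝ) (hσf : 0 < σf)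
    (hstrconv : ∀ u ∈ U, ∀ v ∈ U,
      f v + ⟪gradf v, u - v⟫ + σf / 2 * ‖u - v‖ ^ 2 ≤ f u)
    (hgdiff : ∀ i : Fin p, ∀ v ∈ U, HasGradientAt (fun w => g w i) (Dg v i) v)
    (hgconv : ∀ i : Fin p, ∀ u ∈ U, ∀ v ∈ U,
      g v i + ⟪Dg v i, u - v⟫ ≤ g u i)
    (hjac : ∀ u ∈ U, Real.sqrt (∑ i, ‖Dg u i‖ ^ 2) ≤ cg)
    -- ux x is the unique minimizer of the Lagrangian L(·, x) over U
    (ux : EuclideanSpace ℝ (Fin p) → EuclideanSpace ℝ (Fin n))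
    (hmem : ∀ x : EuclideanSpace ℝ (Fin p), (∀ i, 0 ≤ x i) → ux x ∈ U)
    (hmin : ∀ x : EuclideanSpace ℝ (Fin p), (∀ i, 0 ≤ x i) → ∀ u ∈ U,
      f (ux x) + ∑ i, x i * g (ux x) i ≤ f u + ∑ i, x i * g u i)
    -- d is the dual function
    (d : EuclideanSpace ℝ (Fin p) → ℝ)
    (hd : ∀ x : EuclideanSpace ℝ (Fin p), (∀ i, 0 ≤ x i) →
      d x = f (ux x) + ∑ i, x i * g (ux x) i) :
    (∀ x : EuclideanSpace ℝ (Fin p), (∀ i, 0 ≤ x i) →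
      HasGradientWithinAt d (g (ux x)) {y : EuclideanSpace ℝ (Fin p) | ∀ i, 0 ≤ y i} x) ∧
    (∀ x xbar : EuclideanSpace ℝ (Fin p), (∀ i, 0 ≤ x i) → (∀ i, 0 ≤ xbar i) →
      ‖g (ux x) - g (ux xbar)‖ ≤ cg ^ 2 / σf * ‖x - xbar‖) := by
  simp only [← lagrangian_euclidean] at hmin hd
  have hgrowth : ∀ x : EuclideanSpace ℝ (Fin p), (∀ i, 0 ≤ x i) → ∀ v ∈ U,
      lagrangian f g x (ux x) + σf / 2 * ‖v - ux x‖ ^ 2 ≤ lagrangian f g x v := by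
    intro x hx v hv
    have hL : HasStrongSubgradientsOn U σf (lagrangian f g x)
        (fun w => gradf w + ∑ i, x i • Dg w i) := by
      simpa only [← lagrangian_euclidean] using
        HasStrongSubgradientsOn.add_sum_smul hstrconv Finset.univ hgconv hx
    exact hL.add_sq_le_of_isMinOn hUconv (hmin x hx) (hmem x hx) hv
  have hglip : ∀ u ∈ U, ∀ v ∈ U, ‖g u - g v‖ ≤ cg * ‖u - v‖ :=
    fun u hu v hv => hUconv.norm_sub_le_of_sqrt_sum_sq_norm_gradient_le hgdiff hjac hu hv
  have hlip : ∀ x xbar : EuclideanSpace ℝ (Fin p), (∀ i, 0 ≤ x i) → (∀ i, 0 ≤ xbar i) →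
      ‖g (ux x) - g (ux xbar)‖ ≤ cg ^ 2 / σf * ‖x - xbar‖ := fun x xbar hx hxbar =>
    norm_sub_le_of_lagrangian_growth hσf ((Real.sqrt_nonneg _).trans (hjac _ (hmem x hx))) hglip
      (hmem x hx) (hmem xbar hxbar) (hgrowth x hx) (hgrowth xbar hxbar)
  refine ⟨fun x hx => ?_, hlip⟩
  exact hasGradientWithinAt_dual hmem hmin hd (fun x hx y hy => hlip x y hx hy) hx

/-- the dual function `d(x) = min_{u ∈ U} [f(u) + ⟨x, g(u)⟩]` is
differentiable on the nonnegative orthant with `∇d(x) = g(u(x))`, and this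
gradient is Lipschitz with constant `L_d = c_g² / σ_f`. -/
theorem dual_function_gradient_lipschitz {n p : ℕ}
    (U : Set (EuclideanSpace ℝ (Fin n)))
    (hUconv : Convex ℝ U) (hUclosed : IsClosed U)
    (f : EuclideanSpace ℝ (Fin n) → ℝ)
    (gradf : EuclideanSpace ℝ (Fin n) → EuclideanSpace ℝ (Fin n))
    (g : EuclideanSpace ℝ (Fin n) → EuclideanSpace ℝ (Fin p))
    (Dg : EuclideanSpace ℝ (Fin n) → Fin p → EuclideanSpace ℝ (Fin n))
    (σf cg : ℝ) (hσf : 0 < σf) (hcg : 0 < cg)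
    (hfdiff : ∀ v ∈ U, HasGradientAt f (gradf v) v)
    (hstrconv : ∀ u ∈ U, ∀ v ∈ U,
      f v + ⟪gradf v, u - v⟫ + σf / 2 * ‖u - v‖ ^ 2 ≤ f u)
    (hgdiff : ∀ i : Fin p, ∀ v ∈ U, HasGradientAt (fun w => g w i) (Dg v i) v)
    (hgconv : ∀ i : Fin p, ∀ u ∈ U, ∀ v ∈ U,
      g v i + ⟪Dg v i, u - v⟫ ≤ g u i)
    (hjac : ∀ u ∈ U, Real.sqrt (∑ i, ‖Dg u i‖ ^ 2) ≤ cg)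
    -- ux x is the unique minimizer of the Lagrangian L(·, x) over U
    (ux : EuclideanSpace ℝ (Fin p) → EuclideanSpace ℝ (Fin n))
    (hmem : ∀ x : EuclideanSpace ℝ (Fin p), (∀ i, 0 ≤ x i) → ux x ∈ U)
    (hmin : ∀ x : EuclideanSpace ℝ (Fin p), (∀ i, 0 ≤ x i) → ∀ u ∈ U,
      f (ux x) + ∑ i, x i * g (ux x) i ≤ f u + ∑ i, x i * g u i)
    -- d is the dual function
    (d : EuclideanSpace ℝ (Fin p) → ℝ)
    (hd : ∀ x : EuclideanSpace ℝ (Fin p), (∀ i, 0 ≤ x i) →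
      d x = f (ux x) + ∑ i, x i * g (ux x) i) :
    (∀ x : EuclideanSpace ℝ (Fin p), (∀ i, 0 ≤ x i) →
      HasGradientWithinAt d (g (ux x)) {y : EuclideanSpace ℝ (Fin p) | ∀ i, 0 ≤ y i} x) ∧
    (∀ x xbar : EuclideanSpace ℝ (Fin p), (∀ i, 0 ≤ x i) → (∀ i, 0 ≤ xbar i) →
      ‖g (ux x) - g (ux xbar)‖ ≤ cg ^ 2 / σf * ‖x - xbar‖) :=
  dual_function_gradient_lipschitz_general U hUconv f gradf g Dg σf cg hσf hstrconv hgdiff hgconv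
    hjac ux hmem hmin d hd
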